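/- arXiv:2309.10792 — 3 statements merged into one kernel-verified Lean document; each statement's English description precedes it below -/
import Mathlib

section
/- Assume (a) the only β = (β₀,β₁) ∈ ℝ × ℝ^q with β₀ + β₁ᵀA_t = 0 for every t = 1,…,T−T₀ is β = 0, and (b) Σ_{t=1}^{T₀} π_t > 0 and Σ_{t=1}^{T₀} g_t > 0. If two parameter pairs (β,μ) and (β′,μ′) satisfy m_t(β,μ) = m_t(β′,μ′) for every t = 1,…,T, then β = β′ and μ = μ′. (Identifiability of the semi-mechanistic model, Proposition 3.1.) -/
open Finset

/-- Reproduction number `R(A, β) = K (1 + exp(-(β₀ + β₁ᵀ A)))⁻¹`. -/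
noncomputable def repro (K : ℝ) {q : ℕ} (β0 : ℝ) (β1 : Fin q → ℝ) (A : Fin q → ℝ) : ℝ :=
  K * (1 + Real.exp (-(β0 + ∑ i, β1 i * A i)))⁻¹

/-- Infection process in shifted time: `infect n` is the infection value at
(paper) time `t = n - T₀`, so `infect 0 = 0` (times `t ≤ -T₀`), `infect n = exp μ`
for `1 ≤ n ≤ T₀` (times `-T₀ < t ≤ 0`), and for `n > T₀` (times `t ≥ 1`)
`I_t = R(A_t, β) ∑_{s < t} I_s g_{t-s}`. -/
noncomputable def infect (T₀ : ℕ) (K : ℝ) {q : ℕ} (A : ℕ → Fin q → ℝ)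
    (g : ℕ → ℝ) (β0 : ℝ) (β1 : Fin q → ℝ) (μ : ℝ) : ℕ → ℝ
  | 0 => 0
  | (n + 1) =>
    if n + 1 ≤ T₀ then Real.exp μ
    else
      repro K β0 β1 (A (n + 1 - T₀)) *
        ∑ m ∈ (Finset.range (n + 1)).attach,
          infect T₀ K A g β0 β1 μ m.1 * g (n + 1 - m.1)
  termination_by n => n
  decreasing_by exact Finset.mem_range.mp m.2

/-- Mean outcome `m_t(β, μ) = α ∑_{s < t} I_s π_{t-s}` at paper time `t ≥ 1`
(shifted index `t + T₀`). -/
noncomputable def meanOut (T₀ : ℕ) (α K : ℝ) {q : ℕ} (A : ℕ → Fin q → ℝ)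
    (g π : ℕ → ℝ) (β0 : ℝ) (β1 : Fin q → ℝ) (μ : ℝ) (t : ℕ) : ℝ :=
  α * ∑ m ∈ Finset.range (t + T₀), infect T₀ K A g β0 β1 μ m * π (t + T₀ - m)

lemma infect_zero (T₀ : ℕ) (K : ℝ) {q : ℕ} (A : ℕ → Fin q → ℝ)
    (g : ℕ → ℝ) (β0 : ℝ) (β1 : Fin q → ℝ) (μ : ℝ) :
    infect T₀ K A g β0 β1 μ 0 = 0 := by
  rw [infect]

lemma infect_succ (T₀ : ℕ) (K : ℝ) {q : ℕ} (A : ℕ → Fin q → ℝ)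
    (g : ℕ → ℝ) (β0 : ℝ) (β1 : Fin q → ℝ) (μ : ℝ) (n : ℕ) :
    infect T₀ K A g β0 β1 μ (n + 1) =
      if n + 1 ≤ T₀ then Real.exp μ
      else
        repro K β0 β1 (A (n + 1 - T₀)) *
          ∑ m ∈ Finset.range (n + 1), infect T₀ K A g β0 β1 μ m * g (n + 1 - m) := by
  rw [infect, Finset.sum_attach (Finset.range (n + 1))
    (fun m => infect T₀ K A g β0 β1 μ m * g (n + 1 - m))]

lemma repro_pos {K : ℝ} (hK : 0 < K) {q : ℕ} (β0 : ℝ) (β1 a : Fin q → ℝ) :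
    0 < repro K β0 β1 a := by
  unfold repro; positivity

lemma repro_inj {K : ℝ} (hK : 0 < K) {q : ℕ} {β0 β0' : ℝ} {β1 β1' : Fin q → ℝ} {a : Fin q → ℝ}
    (h : repro K β0 β1 a = repro K β0' β1' a) :
    β0 + ∑ i, β1 i * a i = β0' + ∑ i, β1' i * a i := by
  unfold repro at h
  have h1 := mul_left_cancel₀ (ne_of_gt hK) h
  have h2 := inv_injective h1
  have h3 : Real.exp (-(β0 + ∑ i, β1 i * a i)) = Real.exp (-(β0' + ∑ i, β1' i * a i)) := by
    linarith
  have := Real.exp_injective h3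
  linarith

lemma infect_init (T₀ : ℕ) (K : ℝ) {q : ℕ} (A : ℕ → Fin q → ℝ)
    (g : ℕ → ℝ) (β0 : ℝ) (β1 : Fin q → ℝ) (μ : ℝ) {n : ℕ}
    (h1 : 1 ≤ n) (h2 : n ≤ T₀) :
    infect T₀ K A g β0 β1 μ n = Real.exp μ := by
  obtain ⟨m, rfl⟩ := Nat.exists_eq_add_of_le h1
  rw [add_comm, infect_succ, if_pos (by omega)]

lemma infect_nonneg (T₀ : ℕ) {K : ℝ} (hK : 0 < K) {q : ℕ} (A : ℕ → Fin q → ℝ)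
    {g : ℕ → ℝ} (hg : ∀ t, 0 ≤ g t) (β0 : ℝ) (β1 : Fin q → ℝ) (μ : ℝ) (n : ℕ) :
    0 ≤ infect T₀ K A g β0 β1 μ n := by
  induction n using Nat.strong_induction_on with
  | _ n ih =>
    match n with
    | 0 => rw [infect_zero]
    | (m + 1) =>
      rw [infect_succ]
      split
      · exact (Real.exp_pos μ).le
      · refine mul_nonneg (repro_pos hK _ _ _).le (Finset.sum_nonneg fun i hi => ?_)
        exact mul_nonneg (ih i (Finset.mem_range.mp hi)) (hg _)

lemma infect_pos (T₀ : ℕ) (hT₀ : 1 ≤ T₀) {K : ℝ} (hK : 0 < K) {q : ℕ} (A : ℕ → Fin q → ℝ)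
    {g : ℕ → ℝ} (hg : ∀ t, 0 ≤ g t) {j : ℕ} (hj1 : 1 ≤ j) (hj2 : j ≤ T₀) (hgj : 0 < g j)
    (β0 : ℝ) (β1 : Fin q → ℝ) (μ : ℝ) {n : ℕ} (hn : 1 ≤ n) :
    0 < infect T₀ K A g β0 β1 μ n := by
  induction n using Nat.strong_induction_on with
  | _ n ih =>
    match n with
    | (m + 1) =>
      rw [infect_succ]
      split
      · exact Real.exp_pos μ
      · rename_i hle
        refine mul_pos (repro_pos hK _ _ _) (Finset.sum_pos' ?_ ?_)
        · intro i hi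
          exact mul_nonneg (infect_nonneg T₀ hK A hg β0 β1 μ i) (hg _)
        · refine ⟨m + 1 - j, Finset.mem_range.mpr (by omega), ?_⟩
          have hidx : m + 1 - (m + 1 - j) = j := by omega
          rw [hidx]
          exact mul_pos (ih (m + 1 - j) (by omega) (by omega)) hgj

lemma infect_congr (T₀ : ℕ) (K : ℝ) {q : ℕ} (A : ℕ → Fin q → ℝ)
    (g : ℕ → ℝ) (β0 β0' : ℝ) (β1 β1' : Fin q → ℝ) (μ : ℝ) (N : ℕ)
    (hrep : ∀ m, T₀ < m → m ≤ N → repro K β0 β1 (A (m - T₀)) = repro K β0' β1' (A (m - T₀))) :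
    ∀ n ≤ N, infect T₀ K A g β0 β1 μ n = infect T₀ K A g β0' β1' μ n := by
  intro n
  induction n using Nat.strong_induction_on with
  | _ n ih =>
    intro hn
    match n with
    | 0 => rw [infect_zero, infect_zero]
    | (m + 1) =>
      rw [infect_succ, infect_succ]
      split
      · rfl
      · rename_i hle
        rw [hrep (m + 1) (by omega) hn]
        congr 1
        refine Finset.sum_congr rfl fun i hi => ?_
        have him := Finset.mem_range.mp hi
        rw [ih i him (by omega)]


/-- **Identifiability of the semi-mechanistic model (Proposition 3.1).**
If (a) the only `β = (β₀, β₁)` with `β₀ + β₁ᵀ A_t = 0` for all `t = 1, …, T - T₀`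
is `β = 0`, and (b) `∑_{t=1}^{T₀} π_t > 0` and `∑_{t=1}^{T₀} g_t > 0`, then equal
mean outcomes `m_t(β, μ) = m_t(β', μ')` for all `t = 1, …, T` force `β = β'` and
`μ = μ'`. -/
theorem identifiability_semi_mechanistic
    (T₀ T : ℕ) (hT₀ : 1 ≤ T₀) (hT : 1 ≤ T)
    (α K : ℝ) (hα : 0 < α) (hK : 0 < K)
    {q : ℕ} (A : ℕ → Fin q → ℝ)
    (g π : ℕ → ℝ) (hg : ∀ t, 0 ≤ g t) (hπ : ∀ t, 0 ≤ π t)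
    (hgsum : ∑' t : ℕ, g (t + 1) = 1) (hπsum : ∑' t : ℕ, π (t + 1) = 1)
    (ha : ∀ (β0 : ℝ) (β1 : Fin q → ℝ),
      (∀ t : ℕ, 1 ≤ t → t ≤ T - T₀ → β0 + ∑ i, β1 i * A t i = 0) →
      β0 = 0 ∧ β1 = 0)
    (hb_π : 0 < ∑ t ∈ Finset.Icc 1 T₀, π t)
    (hb_g : 0 < ∑ t ∈ Finset.Icc 1 T₀, g t)
    (β0 β0' : ℝ) (β1 β1' : Fin q → ℝ) (μ μ' : ℝ)
    (hm : ∀ t : ℕ, 1 ≤ t → t ≤ T →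
      meanOut T₀ α K A g π β0 β1 μ t = meanOut T₀ α K A g π β0' β1' μ' t) :
    β0 = β0' ∧ β1 = β1' ∧ μ = μ' := by
  -- Step 0 : μ = μ'
  have key : ∀ (b0 : ℝ) (b1 : Fin q → ℝ) (m0 : ℝ),
      ∑ m ∈ Finset.range (1 + T₀), infect T₀ K A g b0 b1 m0 m * π (1 + T₀ - m)
        = Real.exp m0 * ∑ t ∈ Finset.Icc 1 T₀, π t := by
    intro b0 b1 m0
    rw [show 1 + T₀ = T₀ + 1 from add_comm _ _, Finset.sum_range_succ']
    rw [infect_zero, zero_mul, add_zero]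
    have hc : ∀ i ∈ Finset.range T₀,
        infect T₀ K A g b0 b1 m0 (i + 1) * π (T₀ + 1 - (i + 1))
          = Real.exp m0 * π (T₀ - i) := by
      intro i hi
      have hi' := Finset.mem_range.mp hi
      rw [infect_init T₀ K A g b0 b1 m0 (by omega) (by omega)]
      congr 2
      omega
    rw [Finset.sum_congr rfl hc, ← Finset.mul_sum]
    congr 1
    calc ∑ i ∈ Finset.range T₀, π (T₀ - i)
        = ∑ i ∈ Finset.range T₀, π (i + 1) := by
          rw [← Finset.sum_range_reflect (fun i => π (i + 1)) T₀]
          refine Finset.sum_congr rfl fun i hi => ?_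
          have hi' := Finset.mem_range.mp hi
          congr 1
          omega
      _ = ∑ t ∈ Finset.Icc 1 T₀, π t := by
          rw [show Finset.Icc 1 T₀ = Finset.Ico 1 (T₀ + 1) from (Finset.Ico_add_one_right_eq_Icc 1 T₀).symm,
            Finset.sum_Ico_eq_sum_range]
          simp [Nat.add_sub_cancel]
          exact Finset.sum_congr rfl fun i _ => by rw [Nat.add_comm]
  have hμ : μ = μ' := by
    have h1 := hm 1 le_rfl hT
    unfold meanOut at h1
    rw [key β0 β1 μ, key β0' β1' μ'] at h1
    have hC := ne_of_gt hb_π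
    have he : Real.exp μ = Real.exp μ' :=
      mul_right_cancel₀ hC (mul_left_cancel₀ (ne_of_gt hα) h1)
    exact Real.exp_injective he
  subst hμ
  -- minimal k with π k > 0
  obtain ⟨t0, ht0m, hπt0⟩ := Finset.exists_lt_of_sum_lt
    (show ∑ t ∈ Finset.Icc 1 T₀, (0:ℝ) < ∑ t ∈ Finset.Icc 1 T₀, π t by simpa using hb_π)
  have ht0' := Finset.mem_Icc.mp ht0m
  have hex : ∃ k, 0 < π k ∧ 1 ≤ k := ⟨t0, hπt0, ht0'.1⟩
  set k := Nat.find hex with hkdef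
  have hπk : 0 < π k := (Nat.find_spec hex).1
  have hk1 : 1 ≤ k := (Nat.find_spec hex).2
  have hkT₀ : k ≤ T₀ := le_trans (Nat.find_min' hex ⟨hπt0, ht0'.1⟩) ht0'.2
  have hπsmall : ∀ j, 1 ≤ j → j < k → π j = 0 := by
    intro j hj1 hjk
    have h := Nat.find_min hex hjk
    push_neg at h
    rcases (hπ j).lt_or_eq with hlt | heq
    · have := h hlt
      omega
    · exact heq.symm
  -- witness for g
  obtain ⟨j0, hj0m, hgj0⟩ := Finset.exists_lt_of_sum_lt
    (show ∑ t ∈ Finset.Icc 1 T₀, (0:ℝ) < ∑ t ∈ Finset.Icc 1 T₀, g t by simpa using hb_g)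
  have hj0' := Finset.mem_Icc.mp hj0m
  -- main claim
  have claim : ∀ n, 1 ≤ n → n ≤ T - T₀ →
      β0 + ∑ i, β1 i * A n i = β0' + ∑ i, β1' i * A n i := by
    intro n
    induction n using Nat.strong_induction_on with
    | _ n ih =>
      intro hn1 hn2
      have hTT : T₀ < T := by omega
      have hinf : ∀ m ≤ T₀ + n - 1,
          infect T₀ K A g β0 β1 μ m = infect T₀ K A g β0' β1' μ m := by
        apply infect_congr
        intro m hm1 hm2
        have h := ih (m - T₀) (by omega) (by omega) (by omega)
        unfold repro
        rw [h]
      have h2 := hm (n + k) (by omega) (by omega)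
      unfold meanOut at h2
      have h3 : ∑ m ∈ Finset.range (n + k + T₀),
          (infect T₀ K A g β0 β1 μ m - infect T₀ K A g β0' β1' μ m)
            * π (n + k + T₀ - m) = 0 := by
        have h2' := mul_left_cancel₀ (ne_of_gt hα) h2
        have hd : ∑ m ∈ Finset.range (n + k + T₀),
            (infect T₀ K A g β0 β1 μ m - infect T₀ K A g β0' β1' μ m)
              * π (n + k + T₀ - m)
            = (∑ m ∈ Finset.range (n + k + T₀),
                infect T₀ K A g β0 β1 μ m * π (n + k + T₀ - m))
              - ∑ m ∈ Finset.range (n + k + T₀),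
                infect T₀ K A g β0' β1' μ m * π (n + k + T₀ - m) := by
          rw [← Finset.sum_sub_distrib]
          exact Finset.sum_congr rfl fun i _ => by ring
        rw [hd, h2', sub_self]
      have hsingle : ∑ m ∈ Finset.range (n + k + T₀),
          (infect T₀ K A g β0 β1 μ m - infect T₀ K A g β0' β1' μ m)
            * π (n + k + T₀ - m)
          = (infect T₀ K A g β0 β1 μ (T₀ + n) - infect T₀ K A g β0' β1' μ (T₀ + n))
              * π (n + k + T₀ - (T₀ + n)) := by
        apply Finset.sum_eq_single_of_mem
        · exact Finset.mem_range.mpr (by omega)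
        · intro b hb hbne
          have hb' := Finset.mem_range.mp hb
          by_cases hcase : b < T₀ + n
          · rw [hinf b (by omega), sub_self, zero_mul]
          · rw [hπsmall (n + k + T₀ - b) (by omega) (by omega), mul_zero]
      have h4 : (infect T₀ K A g β0 β1 μ (T₀ + n)
          - infect T₀ K A g β0' β1' μ (T₀ + n)) * π k = 0 := by
        rw [show n + k + T₀ - (T₀ + n) = k by omega] at hsingle
        rw [← hsingle]
        exact h3
      have hI : infect T₀ K A g β0 β1 μ (T₀ + n)
          = infect T₀ K A g β0' β1' μ (T₀ + n) := by
        rcases mul_eq_zero.mp h4 with h | h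
        · exact sub_eq_zero.mp h
        · exact absurd h (ne_of_gt hπk)
      obtain ⟨s, hs⟩ : ∃ s, T₀ + n = s + 1 := ⟨T₀ + n - 1, by omega⟩
      rw [hs, infect_succ, infect_succ, if_neg (show ¬ s + 1 ≤ T₀ by omega),
        if_neg (show ¬ s + 1 ≤ T₀ by omega)] at hI
      have hSeq : ∑ m ∈ Finset.range (s + 1), infect T₀ K A g β0 β1 μ m * g (s + 1 - m)
          = ∑ m ∈ Finset.range (s + 1), infect T₀ K A g β0' β1' μ m * g (s + 1 - m) := by
        refine Finset.sum_congr rfl fun i hi => ?_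
        have hi' := Finset.mem_range.mp hi
        rw [hinf i (by omega)]
      rw [hSeq] at hI
      have hS : 0 < ∑ m ∈ Finset.range (s + 1),
          infect T₀ K A g β0' β1' μ m * g (s + 1 - m) := by
        apply Finset.sum_pos'
        · intro i _
          exact mul_nonneg (infect_nonneg T₀ hK A hg β0' β1' μ i) (hg _)
        · refine ⟨s + 1 - j0, Finset.mem_range.mpr (by omega), ?_⟩
          rw [show s + 1 - (s + 1 - j0) = j0 by omega]
          exact mul_pos
            (infect_pos T₀ hT₀ hK A hg hj0'.1 hj0'.2 hgj0 β0' β1' μ (by omega)) hgj0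
      have hrepeq := mul_right_cancel₀ (ne_of_gt hS) hI
      have hlin := repro_inj hK hrepeq
      rwa [show s + 1 - T₀ = n by omega] at hlin
  have hfin : ∀ t, 1 ≤ t → t ≤ T - T₀ →
      (β0 - β0') + ∑ i, (β1 i - β1' i) * A t i = 0 := by
    intro t h1 h2
    have hc := claim t h1 h2
    have hsd : ∑ i, (β1 i - β1' i) * A t i
        = ∑ i, β1 i * A t i - ∑ i, β1' i * A t i := by
      rw [← Finset.sum_sub_distrib]
      exact Finset.sum_congr rfl fun i _ => by ring
    rw [hsd]
    linarith
  obtain ⟨hb0, hb1⟩ := ha (β0 - β0') (fun i => β1 i - β1' i) hfin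
  refine ⟨by linarith, ?_, rfl⟩
  funext i
  have hdi := congrFun hb1 i
  simpa [sub_eq_zero] using hdi
end

section
/- (Uniform equicontinuity of the non-coverage functions, Lemma B.1.) The collection {r₀, r₁, r₂, …} is uniformly equicontinuous with respect to (u, χ²): for every ε > 0 there exists δ > 0 such that for every integer d ≥ 1 and all u, u′, χ, χ′ ≥ 0 with |u − u′| < δ and |χ² − χ′²| < δ, one has |r_{d−1}(u,χ) − r_{d−1}(u′,χ′)| ≤ ε. -/
open MeasureTheory ProbabilityTheory Set
open scoped NNReal

/-- The chi-squared distribution with `k` degrees of freedom, as a measure on `ℝ`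
(the Dirac mass at `0` when `k = 0`). -/
noncomputable def chiSqMeasure (k : ℕ) : Measure ℝ :=
  if k = 0 then Measure.dirac 0 else gammaMeasure ((k : ℝ) / 2) (1 / 2)

/-- `r₀(u, χ) = P[|Z - √u| ≥ χ]` for a standard normal `Z`. -/
noncomputable def rZero (u χ : ℝ) : ℝ :=
  ((gaussianReal 0 1) {z : ℝ | χ ≤ |z - Real.sqrt u|}).toReal

/-- `r_{d-1}(u, χ) = P[χ²_{d-1} + (Z - √u)² ≥ χ²]` for a standard normal `Z`
independent of a chi-squared `χ²_{d-1}` with `d - 1` degrees of freedom. -/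
noncomputable def rNC (d : ℕ) (u χ : ℝ) : ℝ :=
  (((gaussianReal 0 1).prod (chiSqMeasure (d - 1)))
    {p : ℝ × ℝ | χ ^ 2 ≤ p.2 + (p.1 - Real.sqrt u) ^ 2}).toReal

lemma chiSq_prob (k : ℕ) : IsProbabilityMeasure (chiSqMeasure k) := by
  rw [chiSqMeasure]
  split_ifs with h
  · infer_instance
  · have hk : 0 < (k : ℝ) := by exact_mod_cast Nat.pos_of_ne_zero h
    exact isProbabilityMeasure_gammaMeasure (by linarith) (by norm_num)

lemma gpdf_le (x : ℝ) : gaussianPDFReal 0 1 x ≤ 1 / 2 := by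
  rw [gaussianPDFReal]
  have h2pi : (4 : ℝ) ≤ 2 * Real.pi := by
    have := Real.pi_gt_three; linarith
  have hsqrt : (2 : ℝ) ≤ Real.sqrt (2 * Real.pi * (1 : ℝ≥0)) := by
    have h4 : (4 : ℝ) ≤ 2 * Real.pi * (1 : ℝ≥0) := by push_cast; linarith
    nlinarith [Real.sq_sqrt (le_trans (by norm_num : (0:ℝ) ≤ 4) h4),
      Real.sqrt_nonneg (2 * Real.pi * (1 : ℝ≥0))]
  have hexp : Real.exp (-(x - 0) ^ 2 / (2 * (1 : ℝ≥0))) ≤ 1 := by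
    rw [show (1 : ℝ) = Real.exp 0 by simp]
    apply Real.exp_le_exp.mpr
    have : (0 : ℝ) ≤ (x - 0) ^ 2 := sq_nonneg _
    push_cast
    nlinarith
  have hinv : (Real.sqrt (2 * Real.pi * (1 : ℝ≥0)))⁻¹ ≤ 1 / 2 := by
    rw [inv_le_comm₀ (by linarith) (by norm_num)]
    linarith
  have hpos : (0 : ℝ) ≤ (Real.sqrt (2 * Real.pi * (1 : ℝ≥0)))⁻¹ :=
    inv_nonneg.mpr (Real.sqrt_nonneg _)
  calc (Real.sqrt (2 * Real.pi * (1 : ℝ≥0)))⁻¹ * Real.exp (-(x - 0) ^ 2 / (2 * (1 : ℝ≥0)))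
      ≤ (Real.sqrt (2 * Real.pi * (1 : ℝ≥0)))⁻¹ * 1 := by
        exact mul_le_mul_of_nonneg_left hexp hpos
    _ ≤ 1 / 2 := by rw [mul_one]; exact hinv

lemma gaussian_Icc_le (a b : ℝ) :
    gaussianReal 0 1 (Icc a b) ≤ ENNReal.ofReal ((b - a) / 2) := by
  rcases le_or_gt a b with h | h
  · rw [gaussianReal_apply 0 one_ne_zero]
    calc ∫⁻ x in Icc a b, gaussianPDF 0 1 x
        ≤ ∫⁻ _ in Icc a b, ENNReal.ofReal (1 / 2) := by
          apply lintegral_mono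
          intro x
          rw [gaussianPDF]
          exact ENNReal.ofReal_le_ofReal (gpdf_le x)
      _ = ENNReal.ofReal (1 / 2) * volume (Icc a b) := setLIntegral_const _ _
      _ = ENNReal.ofReal ((b - a) / 2) := by
          rw [Real.volume_Icc, ← ENNReal.ofReal_mul (by norm_num)]
          congr 1; ring
  · rw [Set.Icc_eq_empty h.not_ge]
    simp

lemma sqrt_sub_sqrt_le {x y d : ℝ} (h : x - y ≤ d) :
    Real.sqrt x - Real.sqrt y ≤ Real.sqrt d := by
  rcases le_or_gt x y with hxy | hxy
  · have := Real.sqrt_le_sqrt hxy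
    have := Real.sqrt_nonneg d
    linarith
  rcases le_or_gt y 0 with hy | hy
  · rw [Real.sqrt_eq_zero_of_nonpos hy]
    have : Real.sqrt x ≤ Real.sqrt d := Real.sqrt_le_sqrt (by linarith)
    linarith
  · have h1 : Real.sqrt x ≤ Real.sqrt y + Real.sqrt (x - y) := by
      have hxy' : (0 : ℝ) ≤ x - y := by linarith
      have key : x ≤ (Real.sqrt y + Real.sqrt (x - y)) ^ 2 := by
        have e1 := Real.sq_sqrt hy.le
        have e2 := Real.sq_sqrt hxy'
        have e3 := Real.sqrt_nonneg y
        have e4 := Real.sqrt_nonneg (x - y)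
        nlinarith
      calc Real.sqrt x ≤ Real.sqrt ((Real.sqrt y + Real.sqrt (x - y)) ^ 2) :=
            Real.sqrt_le_sqrt key
        _ = Real.sqrt y + Real.sqrt (x - y) := Real.sqrt_sq (by positivity)
    have h2 : Real.sqrt (x - y) ≤ Real.sqrt d := Real.sqrt_le_sqrt h
    linarith

lemma slice_measurable (s χ : ℝ) :
    MeasurableSet {p : ℝ × ℝ | χ ^ 2 ≤ p.2 + (p.1 - s) ^ 2} :=
  measurableSet_le measurable_const (by fun_prop)

lemma diff_bound_u (k : ℕ) (χ s s' : ℝ) :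
    ((gaussianReal 0 1).prod (chiSqMeasure k))
      ({p : ℝ × ℝ | χ ^ 2 ≤ p.2 + (p.1 - s) ^ 2} \
        {p : ℝ × ℝ | χ ^ 2 ≤ p.2 + (p.1 - s') ^ 2})
      ≤ ENNReal.ofReal |s - s'| := by
  haveI := chiSq_prob k
  rw [Measure.prod_apply_symm ((slice_measurable s χ).diff (slice_measurable s' χ))]
  have key : ∀ w : ℝ,
      gaussianReal 0 1 ((fun z => (z, w)) ⁻¹'
        ({p : ℝ × ℝ | χ ^ 2 ≤ p.2 + (p.1 - s) ^ 2} \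
          {p : ℝ × ℝ | χ ^ 2 ≤ p.2 + (p.1 - s') ^ 2}))
      ≤ ENNReal.ofReal |s - s'| := by
    intro w
    set c := Real.sqrt (χ ^ 2 - w) with hc
    set m := min s s' with hm
    set M := max s s' with hM
    have hsub : ((fun z => (z, w)) ⁻¹'
        ({p : ℝ × ℝ | χ ^ 2 ≤ p.2 + (p.1 - s) ^ 2} \
          {p : ℝ × ℝ | χ ^ 2 ≤ p.2 + (p.1 - s') ^ 2}))
        ⊆ Icc (m + c) (M + c) ∪ Icc (m - c) (M - c) := by
      intro z hz
      obtain ⟨hz1, hz2⟩ := hz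
      simp only [Set.mem_setOf_eq] at hz1 hz2
      push_neg at hz2
      have h1 : χ ^ 2 - w ≤ (z - s) ^ 2 := by linarith
      have h2 : (z - s') ^ 2 ≤ χ ^ 2 - w := by linarith
      have hc1 : c ≤ |z - s| := by
        calc c ≤ Real.sqrt ((z - s) ^ 2) := Real.sqrt_le_sqrt h1
          _ = |z - s| := Real.sqrt_sq_eq_abs _
      have hc2 : |z - s'| ≤ c := by
        calc |z - s'| = Real.sqrt ((z - s') ^ 2) := (Real.sqrt_sq_eq_abs _).symm
          _ ≤ c := Real.sqrt_le_sqrt h2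
      obtain ⟨hb1, hb2⟩ := abs_le.mp hc2
      have hm1 : m ≤ s := min_le_left s s'
      have hm2 : m ≤ s' := min_le_right s s'
      have hM1 : s ≤ M := le_max_left s s'
      have hM2 : s' ≤ M := le_max_right s s'
      rcases le_abs.mp hc1 with hca | hca
      · exact Or.inl ⟨by linarith, by linarith⟩
      · exact Or.inr ⟨by linarith, by linarith⟩
    calc gaussianReal 0 1 ((fun z => (z, w)) ⁻¹' _)
        ≤ gaussianReal 0 1 (Icc (m + c) (M + c) ∪ Icc (m - c) (M - c)) :=
          measure_mono hsub
      _ ≤ gaussianReal 0 1 (Icc (m + c) (M + c)) + gaussianReal 0 1 (Icc (m - c) (M - c)) :=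
          measure_union_le _ _
      _ ≤ ENNReal.ofReal ((M + c - (m + c)) / 2) + ENNReal.ofReal ((M - c - (m - c)) / 2) :=
          add_le_add (gaussian_Icc_le _ _) (gaussian_Icc_le _ _)
      _ = ENNReal.ofReal |s - s'| := by
          have hMm : M - m = |s - s'| := by
            rw [abs_sub_comm]; exact max_sub_min_eq_abs s s'
          rw [show M + c - (m + c) = |s - s'| from by rw [← hMm]; ring,
            show M - c - (m - c) = |s - s'| from by rw [← hMm]; ring,
            ← ENNReal.ofReal_add (by positivity) (by positivity)]
          congr 1; ring
  calc ∫⁻ w, gaussianReal 0 1 ((fun z => (z, w)) ⁻¹' _) ∂(chiSqMeasure k)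
      ≤ ∫⁻ _, ENNReal.ofReal |s - s'| ∂(chiSqMeasure k) := lintegral_mono key
    _ = ENNReal.ofReal |s - s'| := by rw [lintegral_const, measure_univ, mul_one]

lemma diff_bound_chi (k : ℕ) (s χ χ' δ : ℝ) (hδ0 : 0 ≤ δ) (h : χ' ^ 2 - χ ^ 2 ≤ δ) :
    ((gaussianReal 0 1).prod (chiSqMeasure k))
      ({p : ℝ × ℝ | χ ^ 2 ≤ p.2 + (p.1 - s) ^ 2} \
        {p : ℝ × ℝ | χ' ^ 2 ≤ p.2 + (p.1 - s) ^ 2})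
      ≤ ENNReal.ofReal (Real.sqrt δ) := by
  haveI := chiSq_prob k
  rw [Measure.prod_apply_symm ((slice_measurable s χ).diff (slice_measurable s χ'))]
  have key : ∀ w : ℝ,
      gaussianReal 0 1 ((fun z => (z, w)) ⁻¹'
        ({p : ℝ × ℝ | χ ^ 2 ≤ p.2 + (p.1 - s) ^ 2} \
          {p : ℝ × ℝ | χ' ^ 2 ≤ p.2 + (p.1 - s) ^ 2}))
      ≤ ENNReal.ofReal (Real.sqrt δ) := by
    intro w
    set a := Real.sqrt (χ ^ 2 - w) with ha
    set b := Real.sqrt (χ' ^ 2 - w) with hb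
    have hba : b - a ≤ Real.sqrt δ := sqrt_sub_sqrt_le (by linarith)
    have hsub : ((fun z => (z, w)) ⁻¹'
        ({p : ℝ × ℝ | χ ^ 2 ≤ p.2 + (p.1 - s) ^ 2} \
          {p : ℝ × ℝ | χ' ^ 2 ≤ p.2 + (p.1 - s) ^ 2}))
        ⊆ Icc (s + a) (s + b) ∪ Icc (s - b) (s - a) := by
      intro z hz
      obtain ⟨hz1, hz2⟩ := hz
      simp only [Set.mem_setOf_eq] at hz1 hz2
      push_neg at hz2
      have h1 : χ ^ 2 - w ≤ (z - s) ^ 2 := by linarith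
      have h2 : (z - s) ^ 2 ≤ χ' ^ 2 - w := by linarith
      have hc1 : a ≤ |z - s| := by
        calc a ≤ Real.sqrt ((z - s) ^ 2) := Real.sqrt_le_sqrt h1
          _ = |z - s| := Real.sqrt_sq_eq_abs _
      have hc2 : |z - s| ≤ b := by
        calc |z - s| = Real.sqrt ((z - s) ^ 2) := (Real.sqrt_sq_eq_abs _).symm
          _ ≤ b := Real.sqrt_le_sqrt h2
      obtain ⟨hb1, hb2⟩ := abs_le.mp hc2
      rcases le_abs.mp hc1 with hca | hca
      · exact Or.inl ⟨by linarith, by linarith⟩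
      · exact Or.inr ⟨by linarith, by linarith⟩
    calc gaussianReal 0 1 ((fun z => (z, w)) ⁻¹' _)
        ≤ gaussianReal 0 1 (Icc (s + a) (s + b) ∪ Icc (s - b) (s - a)) :=
          measure_mono hsub
      _ ≤ gaussianReal 0 1 (Icc (s + a) (s + b)) + gaussianReal 0 1 (Icc (s - b) (s - a)) :=
          measure_union_le _ _
      _ ≤ ENNReal.ofReal ((s + b - (s + a)) / 2) + ENNReal.ofReal ((s - a - (s - b)) / 2) :=
          add_le_add (gaussian_Icc_le _ _) (gaussian_Icc_le _ _)
      _ ≤ ENNReal.ofReal (Real.sqrt δ / 2) + ENNReal.ofReal (Real.sqrt δ / 2) :=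
          add_le_add (ENNReal.ofReal_le_ofReal (by linarith))
            (ENNReal.ofReal_le_ofReal (by linarith))
      _ = ENNReal.ofReal (Real.sqrt δ) := by
          rw [← ENNReal.ofReal_add (by positivity) (by positivity)]
          congr 1; ring
  calc ∫⁻ w, gaussianReal 0 1 ((fun z => (z, w)) ⁻¹' _) ∂(chiSqMeasure k)
      ≤ ∫⁻ _, ENNReal.ofReal (Real.sqrt δ) ∂(chiSqMeasure k) := lintegral_mono key
    _ = ENNReal.ofReal (Real.sqrt δ) := by rw [lintegral_const, measure_univ, mul_one]

lemma rNC_sub_le (d : ℕ) (u u' χ χ' δ : ℝ) (hδ : 0 ≤ δ)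
    (hu : 0 ≤ u) (hu' : 0 ≤ u') (h1 : |u - u'| ≤ δ) (h2 : χ' ^ 2 - χ ^ 2 ≤ δ) :
    rNC d u χ - rNC d u' χ' ≤ 2 * Real.sqrt δ := by
  set k := d - 1 with hk
  haveI := chiSq_prob k
  set ν := (gaussianReal 0 1).prod (chiSqMeasure k) with hν
  set s := Real.sqrt u with hs
  set s' := Real.sqrt u' with hs'
  set A : ℝ → ℝ → Set (ℝ × ℝ) := fun σ c => {p : ℝ × ℝ | c ^ 2 ≤ p.2 + (p.1 - σ) ^ 2} with hA
  have hss' : |s - s'| ≤ Real.sqrt δ := by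
    have hd1 : u - u' ≤ δ := le_trans (le_abs_self _) h1
    have hd2 : u' - u ≤ δ := by have := neg_abs_le (u - u'); linarith
    rw [abs_sub_le_iff]
    exact ⟨sqrt_sub_sqrt_le hd1, sqrt_sub_sqrt_le hd2⟩
  have hsub : A s χ ⊆ A s' χ' ∪ ((A s χ \ A s' χ) ∪ (A s' χ \ A s' χ')) := by
    intro p hp
    by_cases h3 : p ∈ A s' χ
    · by_cases h4 : p ∈ A s' χ'
      · exact Or.inl h4
      · exact Or.inr (Or.inr ⟨h3, h4⟩)
    · exact Or.inr (Or.inl ⟨hp, h3⟩)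
  have hmeas : ν (A s χ) ≤ ν (A s' χ') +
      (ENNReal.ofReal (Real.sqrt δ) + ENNReal.ofReal (Real.sqrt δ)) := by
    calc ν (A s χ) ≤ ν (A s' χ' ∪ ((A s χ \ A s' χ) ∪ (A s' χ \ A s' χ'))) :=
          measure_mono hsub
      _ ≤ ν (A s' χ') + ν ((A s χ \ A s' χ) ∪ (A s' χ \ A s' χ')) := measure_union_le _ _
      _ ≤ ν (A s' χ') + (ν (A s χ \ A s' χ) + ν (A s' χ \ A s' χ')) :=
          add_le_add le_rfl (measure_union_le _ _)
      _ ≤ ν (A s' χ') + (ENNReal.ofReal (Real.sqrt δ) + ENNReal.ofReal (Real.sqrt δ)) := by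
          apply add_le_add le_rfl
          apply add_le_add
          · exact le_trans (diff_bound_u k χ s s') (ENNReal.ofReal_le_ofReal hss')
          · exact diff_bound_chi k s' χ χ' δ hδ h2
  have hfin : ν (A s' χ') + (ENNReal.ofReal (Real.sqrt δ) + ENNReal.ofReal (Real.sqrt δ)) ≠ ⊤ :=
    ENNReal.add_ne_top.mpr ⟨measure_ne_top _ _,
      ENNReal.add_ne_top.mpr ⟨ENNReal.ofReal_ne_top, ENNReal.ofReal_ne_top⟩⟩
  have htoReal : rNC d u χ ≤ rNC d u' χ' + 2 * Real.sqrt δ := by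
    have := ENNReal.toReal_mono hfin hmeas
    rw [ENNReal.toReal_add (measure_ne_top _ _)
        (ENNReal.add_ne_top.mpr ⟨ENNReal.ofReal_ne_top, ENNReal.ofReal_ne_top⟩),
      ENNReal.toReal_add ENNReal.ofReal_ne_top ENNReal.ofReal_ne_top,
      ENNReal.toReal_ofReal (Real.sqrt_nonneg δ)] at this
    have e1 : rNC d u χ = (ν (A s χ)).toReal := rfl
    have e2 : rNC d u' χ' = (ν (A s' χ')).toReal := rfl
    rw [e1, e2]
    linarith
  linarith

/-- **Uniform equicontinuity of the non-coverage functions (Lemma B.1).**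
The collection `{r₀, r₁, r₂, …}` is uniformly equicontinuous with respect to
`(u, χ²)`: for every `ε > 0` there is a `δ > 0` such that for every integer
`d ≥ 1` and all `u, u', χ, χ' ≥ 0` with `|u - u'| < δ` and `|χ² - χ'²| < δ`,
`|r_{d-1}(u, χ) - r_{d-1}(u', χ')| ≤ ε`. -/
theorem rNC_uniformly_equicontinuous :
    ∀ ε : ℝ, 0 < ε → ∃ δ : ℝ, 0 < δ ∧
      ∀ d : ℕ, 1 ≤ d →
        ∀ u u' χ χ' : ℝ, 0 ≤ u → 0 ≤ u' → 0 ≤ χ → 0 ≤ χ' →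
          |u - u'| < δ → |χ ^ 2 - χ' ^ 2| < δ →
          |rNC d u χ - rNC d u' χ'| ≤ ε := by
  intro ε hε
  refine ⟨(ε / 2) ^ 2, by positivity, ?_⟩
  intro d hd u u' χ χ' hu hu' hχ hχ' h1 h2
  have hsq : Real.sqrt ((ε / 2) ^ 2) = ε / 2 := Real.sqrt_sq (by linarith)
  have hδ : (0 : ℝ) ≤ (ε / 2) ^ 2 := by positivity
  have hchi1 : χ' ^ 2 - χ ^ 2 ≤ (ε / 2) ^ 2 := by
    have := neg_abs_le (χ ^ 2 - χ' ^ 2); linarith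
  have hchi2 : χ ^ 2 - χ' ^ 2 ≤ (ε / 2) ^ 2 := by
    have := le_abs_self (χ ^ 2 - χ' ^ 2); linarith
  have hb1 := rNC_sub_le d u u' χ χ' ((ε / 2) ^ 2) hδ hu hu' h1.le hchi1
  have hb2 := rNC_sub_le d u' u χ' χ ((ε / 2) ^ 2) hδ hu' hu
    (by rw [abs_sub_comm]; exact h1.le) hchi2
  rw [hsq] at hb1 hb2
  rw [abs_sub_le_iff]
  constructor <;> linarith
end

section
/- (Continuity of the maximal non-coverage, Lemma B.2.) Fix an integer d ≥ 1. For every (m⁽²⁾, m⁽⁴⁾) ∈ 𝓜, the function χ ↦ ρ_{m⁽²⁾,m⁽⁴⁾}(χ) is continuous on [0,∞); moreover, for every fixed χ ≥ 0, the map (m⁽²⁾, m⁽⁴⁾) ↦ ρ_{m⁽²⁾,m⁽⁴⁾}(χ) is continuous on 𝓜. -/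
open MeasureTheory ProbabilityTheory
open scoped ENNReal

/-- `𝓕_{m⁽²⁾, m⁽⁴⁾}`: the set of Borel probability measures on `[0, ∞)`
(measures on `ℝ` giving no mass to `(-∞, 0)`) with first moment `m⁽²⁾` and
second moment `m⁽⁴⁾`. -/
def momentMeasures (m2 m4 : ℝ) : Set (Measure ℝ) :=
  {F | IsProbabilityMeasure F ∧ F (Set.Iio 0) = 0 ∧
    Integrable (fun u => u) F ∧ Integrable (fun u => u ^ 2) F ∧
    (∫ u, u ∂F) = m2 ∧ (∫ u, u ^ 2 ∂F) = m4}

/-- `𝓜`: the set of attainable moment pairs `(m⁽²⁾, m⁽⁴⁾)`. -/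
def momentSet : Set (ℝ × ℝ) :=
  {p | (momentMeasures p.1 p.2).Nonempty}

/-- The maximal non-coverage
`ρ_{m⁽²⁾, m⁽⁴⁾}(χ) = sup_{F ∈ 𝓕_{m⁽²⁾, m⁽⁴⁾}} ∫ r_{d-1}(u, χ) dF(u)`. -/
noncomputable def rho (d : ℕ) (m2 m4 χ : ℝ) : ℝ :=
  sSup ((fun F => ∫ u, rNC d u χ ∂F) '' momentMeasures m2 m4)

instance chiSq_isProb (k : ℕ) : IsProbabilityMeasure (chiSqMeasure k) := by
  unfold chiSqMeasure
  split_ifs with h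
  · infer_instance
  · exact isProbabilityMeasure_gammaMeasure (by positivity) (by norm_num)

noncomputable def Kg : ℝ := (Real.sqrt (2 * Real.pi))⁻¹

lemma Kg_pos : 0 < Kg := by rw [Kg]; positivity

/-- bound on gaussian measure of a set by Lebesgue measure -/
lemma gauss_le_volume (s : Set ℝ) :
    gaussianReal 0 1 s ≤ ENNReal.ofReal (Real.sqrt (2 * Real.pi))⁻¹ * volume s := by
  rw [gaussianReal_apply 0 one_ne_zero s]
  calc ∫⁻ x in s, gaussianPDF 0 1 x
      ≤ ∫⁻ _ in s, ENNReal.ofReal (Real.sqrt (2 * Real.pi))⁻¹ := by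
        refine setLIntegral_mono measurable_const (fun x _ => ?_)
        rw [gaussianPDF]
        refine ENNReal.ofReal_le_ofReal ?_
        rw [gaussianPDFReal]
        push_cast
        rw [mul_one]
        calc (Real.sqrt (2 * Real.pi))⁻¹ * Real.exp (-(x - 0) ^ 2 / (2*1))
            ≤ (Real.sqrt (2 * Real.pi))⁻¹ * 1 := by
              refine mul_le_mul_of_nonneg_left ?_ (by positivity)
              refine Real.exp_le_one_iff.mpr (by nlinarith [sq_nonneg (x - 0)])
          _ = _ := by ring
    _ = ENNReal.ofReal (Real.sqrt (2 * Real.pi))⁻¹ * volume s := by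
        rw [setLIntegral_const]

lemma gauss_Icc_le (a b : ℝ) :
    gaussianReal 0 1 (Set.Icc a b) ≤ ENNReal.ofReal ((b - a) * (Real.sqrt (2 * Real.pi))⁻¹) := by
  rcases le_or_gt a b with hab | hab
  · calc gaussianReal 0 1 (Set.Icc a b)
        ≤ ENNReal.ofReal (Real.sqrt (2 * Real.pi))⁻¹ * volume (Set.Icc a b) := gauss_le_volume _
      _ = _ := by
          rw [Real.volume_Icc, ← ENNReal.ofReal_mul (by positivity), mul_comm]
  · simp [Set.Icc_eq_empty_of_lt hab]

/-- gaussian measure of a two-sided annulus -/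
lemma gauss_annulus_le (s a b : ℝ) :
    gaussianReal 0 1 {x | a ≤ |x - s| ∧ |x - s| ≤ b} ≤
      ENNReal.ofReal (2 * (b - a) * (Real.sqrt (2 * Real.pi))⁻¹) := by
  rcases lt_or_ge b a with hab | hab
  · have : {x : ℝ | a ≤ |x - s| ∧ |x - s| ≤ b} = ∅ := by
      ext x; simp only [Set.mem_setOf_eq, Set.mem_empty_iff_false, iff_false, not_and, not_le]
      intro h; linarith
    simp [this]
  have hsub : {x : ℝ | a ≤ |x - s| ∧ |x - s| ≤ b} ⊆
      Set.Icc (s + a) (s + b) ∪ Set.Icc (s - b) (s - a) := by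
    intro x ⟨h1, h2⟩
    rcases le_or_gt s x with hx | hx
    · left
      rw [abs_of_nonneg (by linarith)] at h1 h2
      constructor <;> linarith
    · right
      rw [abs_of_neg (by linarith)] at h1 h2
      constructor <;> linarith
  calc gaussianReal 0 1 {x | a ≤ |x - s| ∧ |x - s| ≤ b}
      ≤ gaussianReal 0 1 (Set.Icc (s + a) (s + b) ∪ Set.Icc (s - b) (s - a)) :=
        measure_mono hsub
    _ ≤ gaussianReal 0 1 (Set.Icc (s + a) (s + b)) + gaussianReal 0 1 (Set.Icc (s - b) (s - a)) :=
        measure_union_le _ _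
    _ ≤ ENNReal.ofReal ((b - a) * (Real.sqrt (2 * Real.pi))⁻¹)
        + ENNReal.ofReal ((b - a) * (Real.sqrt (2 * Real.pi))⁻¹) := by
        refine add_le_add ?_ ?_
        · have := gauss_Icc_le (s + a) (s + b); simpa using this
        · have := gauss_Icc_le (s - b) (s - a); simpa using this
    _ = _ := by
        rw [← ENNReal.ofReal_add (mul_nonneg (by linarith) (by positivity)) (mul_nonneg (by linarith) (by positivity))]
        ring_nf

noncomputable def nuP (d : ℕ) : Measure (ℝ × ℝ) :=
  (gaussianReal 0 1).prod (chiSqMeasure (d - 1))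

instance nuP_isProb (d : ℕ) : IsProbabilityMeasure (nuP d) := by
  unfold nuP; infer_instance

def ASet (s χ : ℝ) : Set (ℝ × ℝ) := {p | χ ^ 2 ≤ p.2 + (p.1 - s) ^ 2}

lemma ASet_meas (s χ : ℝ) : MeasurableSet (ASet s χ) :=
  measurableSet_le measurable_const
    (measurable_snd.add ((measurable_fst.sub measurable_const).pow_const 2))

lemma nuP_slice_le (d : ℕ) (D : Set (ℝ × ℝ)) (hD : MeasurableSet D) (c : ℝ≥0∞)
    (h : ∀ y : ℝ, gaussianReal 0 1 ((fun x => (x, y)) ⁻¹' D) ≤ c) :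
    nuP d D ≤ c := by
  rw [nuP, Measure.prod_apply_symm hD]
  calc ∫⁻ y, gaussianReal 0 1 ((fun x => (x, y)) ⁻¹' D) ∂chiSqMeasure (d - 1)
      ≤ ∫⁻ _, c ∂chiSqMeasure (d - 1) := lintegral_mono (fun y => h y)
    _ = c := by simp

lemma nuP_diff_chi (d : ℕ) {χ' χ : ℝ} (h0 : 0 ≤ χ') (h : χ' ≤ χ) (s : ℝ) :
    nuP d (ASet s χ' \ ASet s χ) ≤
      ENNReal.ofReal (2 * Real.sqrt (χ ^ 2 - χ' ^ 2) * (Real.sqrt (2 * Real.pi))⁻¹) := by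
  refine nuP_slice_le d _ ((ASet_meas s χ').diff (ASet_meas s χ)) _ (fun y => ?_)
  have hsq' : χ' ^ 2 ≤ χ ^ 2 := by nlinarith
  set a := Real.sqrt (max (χ' ^ 2 - y) 0) with ha
  set b := Real.sqrt (max (χ ^ 2 - y) 0) with hb
  have hab : a ≤ b := Real.sqrt_le_sqrt (max_le_max (by linarith) le_rfl)
  have ha0 : 0 ≤ a := Real.sqrt_nonneg _
  have hsq : b ^ 2 - a ^ 2 ≤ χ ^ 2 - χ' ^ 2 := by
    rw [hb, ha, Real.sq_sqrt (le_max_right _ _), Real.sq_sqrt (le_max_right _ _)]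
    rcases le_or_gt 0 (χ' ^ 2 - y) with h1 | h1
    · rw [max_eq_left h1, max_eq_left (by linarith)]; linarith
    · rw [max_eq_right h1.le]
      rcases le_or_gt 0 (χ ^ 2 - y) with h2 | h2
      · rw [max_eq_left h2]; linarith
      · rw [max_eq_right h2.le]; linarith
  have hba : b - a ≤ Real.sqrt (χ ^ 2 - χ' ^ 2) := by
    have h1 : (b - a) ^ 2 ≤ χ ^ 2 - χ' ^ 2 := by nlinarith
    calc b - a = Real.sqrt ((b - a) ^ 2) := (Real.sqrt_sq (by linarith)).symm
      _ ≤ _ := Real.sqrt_le_sqrt h1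
  have hsub : (fun x => (x, y)) ⁻¹' (ASet s χ' \ ASet s χ) ⊆
      {x | a ≤ |x - s| ∧ |x - s| ≤ b} := by
    intro x hx
    simp only [Set.mem_preimage, Set.mem_diff, ASet, Set.mem_setOf_eq, not_le] at hx
    obtain ⟨h1, h2⟩ := hx
    constructor
    · rw [ha]
      calc Real.sqrt (max (χ' ^ 2 - y) 0) ≤ Real.sqrt ((x - s) ^ 2) :=
            Real.sqrt_le_sqrt (max_le (by linarith) (sq_nonneg _))
        _ = |x - s| := Real.sqrt_sq_eq_abs _
    · rw [hb]
      calc |x - s| = Real.sqrt ((x - s) ^ 2) := (Real.sqrt_sq_eq_abs _).symm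
        _ ≤ _ := Real.sqrt_le_sqrt (le_max_of_le_left (by linarith))
  calc gaussianReal 0 1 ((fun x => (x, y)) ⁻¹' (ASet s χ' \ ASet s χ))
      ≤ gaussianReal 0 1 {x | a ≤ |x - s| ∧ |x - s| ≤ b} := measure_mono hsub
    _ ≤ ENNReal.ofReal (2 * (b - a) * (Real.sqrt (2 * Real.pi))⁻¹) := gauss_annulus_le s a b
    _ ≤ _ := ENNReal.ofReal_le_ofReal (by
        have : (0:ℝ) < (Real.sqrt (2 * Real.pi))⁻¹ := by positivity
        nlinarith)

lemma nuP_diff_s (d : ℕ) (χ s s' : ℝ) :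
    nuP d (ASet s' χ \ ASet s χ) ≤
      ENNReal.ofReal (2 * |s' - s| * (Real.sqrt (2 * Real.pi))⁻¹) := by
  refine nuP_slice_le d _ ((ASet_meas s' χ).diff (ASet_meas s χ)) _ (fun y => ?_)
  set c := Real.sqrt (max (χ ^ 2 - y) 0) with hc
  set h := |s' - s| with hh
  have hsub : (fun x => (x, y)) ⁻¹' (ASet s' χ \ ASet s χ) ⊆
      {x | c - h ≤ |x - s| ∧ |x - s| ≤ c} := by
    intro x hx
    simp only [Set.mem_preimage, Set.mem_diff, ASet, Set.mem_setOf_eq, not_le] at hx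
    obtain ⟨h1, h2⟩ := hx
    have hcx : |x - s| ≤ c := by
      calc |x - s| = Real.sqrt ((x - s) ^ 2) := (Real.sqrt_sq_eq_abs _).symm
        _ ≤ _ := Real.sqrt_le_sqrt (le_max_of_le_left (by linarith))
    have hcx' : c ≤ |x - s'| := by
      calc c ≤ Real.sqrt ((x - s') ^ 2) :=
            Real.sqrt_le_sqrt (max_le (by linarith) (sq_nonneg _))
        _ = |x - s'| := Real.sqrt_sq_eq_abs _
    refine ⟨?_, hcx⟩
    have : |x - s'| ≤ |x - s| + |s - s'| := by
      calc |x - s'| = |(x - s) + (s - s')| := by ring_nf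
        _ ≤ _ := abs_add_le _ _
    have habs : |s - s'| = h := by rw [hh, abs_sub_comm]
    linarith
  calc gaussianReal 0 1 ((fun x => (x, y)) ⁻¹' (ASet s' χ \ ASet s χ))
      ≤ gaussianReal 0 1 {x | c - h ≤ |x - s| ∧ |x - s| ≤ c} := measure_mono hsub
    _ ≤ ENNReal.ofReal (2 * (c - (c - h)) * (Real.sqrt (2 * Real.pi))⁻¹) :=
        gauss_annulus_le s (c - h) c
    _ = _ := by ring_nf

noncomputable def gG (d : ℕ) (s χ : ℝ) : ℝ := (nuP d (ASet s χ)).toReal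

lemma rNC_eq (d : ℕ) (u χ : ℝ) : rNC d u χ = gG d (Real.sqrt u) χ := rfl

lemma gG_nonneg (d : ℕ) (s χ : ℝ) : 0 ≤ gG d s χ := ENNReal.toReal_nonneg

lemma gG_le_one (d : ℕ) (s χ : ℝ) : gG d s χ ≤ 1 := by
  rw [gG]
  calc (nuP d (ASet s χ)).toReal ≤ (1 : ℝ≥0∞).toReal :=
        ENNReal.toReal_mono ENNReal.one_ne_top prob_le_one
    _ = 1 := ENNReal.toReal_one

lemma gG_le_add_of_diff {d : ℕ} {A B : Set (ℝ × ℝ)} {c : ℝ} (hc : 0 ≤ c)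
    (hd : nuP d (A \ B) ≤ ENNReal.ofReal c) :
    (nuP d A).toReal ≤ (nuP d B).toReal + c := by
  have h1 : nuP d A ≤ nuP d B + ENNReal.ofReal c := by
    calc nuP d A ≤ nuP d (B ∪ A \ B) := measure_mono (by intro x hx; by_cases h : x ∈ B <;> simp [h, hx])
      _ ≤ nuP d B + nuP d (A \ B) := measure_union_le _ _
      _ ≤ _ := add_le_add le_rfl hd
  calc (nuP d A).toReal ≤ (nuP d B + ENNReal.ofReal c).toReal :=
        ENNReal.toReal_mono (by finiteness) h1
    _ = (nuP d B).toReal + c := by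
        rw [ENNReal.toReal_add (by finiteness) ENNReal.ofReal_ne_top, ENNReal.toReal_ofReal hc]

lemma gG_mono_chi (d : ℕ) (s : ℝ) {χ' χ : ℝ} (h0 : 0 ≤ χ') (h : χ' ≤ χ) :
    gG d s χ ≤ gG d s χ' := by
  refine ENNReal.toReal_mono (by finiteness) (measure_mono ?_)
  intro p hp
  simp only [ASet, Set.mem_setOf_eq] at *
  nlinarith

lemma gG_chi_bound (d : ℕ) (s : ℝ) {χ' χ : ℝ} (h0 : 0 ≤ χ') (h : χ' ≤ χ) :
    gG d s χ' ≤ gG d s χ + 2 * Real.sqrt (χ ^ 2 - χ' ^ 2) * Kg :=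
  gG_le_add_of_diff (mul_nonneg (mul_nonneg (by norm_num) (Real.sqrt_nonneg _)) Kg_pos.le) (nuP_diff_chi d h0 h s)

lemma gG_abs_chi (d : ℕ) (s : ℝ) {χ' χ : ℝ} (h0 : 0 ≤ χ') (h : χ' ≤ χ) :
    |gG d s χ - gG d s χ'| ≤ 2 * Real.sqrt (χ ^ 2 - χ' ^ 2) * Kg := by
  rw [abs_sub_le_iff]
  constructor
  · have := gG_mono_chi d s h0 h
    have : gG d s χ - gG d s χ' ≤ 0 := by linarith
    have hpos : (0:ℝ) ≤ 2 * Real.sqrt (χ ^ 2 - χ' ^ 2) * Kg := mul_nonneg (mul_nonneg (by norm_num) (Real.sqrt_nonneg _)) Kg_pos.le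
    linarith
  · have := gG_chi_bound d s h0 h
    linarith

lemma gG_abs_s (d : ℕ) (χ s s' : ℝ) :
    |gG d s' χ - gG d s χ| ≤ 2 * |s' - s| * Kg := by
  rw [abs_sub_le_iff]
  constructor
  · have := gG_le_add_of_diff (c := 2 * |s' - s| * Kg) (mul_nonneg (mul_nonneg (by norm_num) (abs_nonneg _)) Kg_pos.le) (nuP_diff_s d χ s s')
    have h2 : gG d s' χ ≤ gG d s χ + 2 * |s' - s| * Kg := this
    linarith
  · have := gG_le_add_of_diff (c := 2 * |s - s'| * Kg) (mul_nonneg (mul_nonneg (by norm_num) (abs_nonneg _)) Kg_pos.le) (nuP_diff_s d χ s' s)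
    rw [abs_sub_comm s s'] at this
    have h2 : gG d s χ ≤ gG d s' χ + 2 * |s' - s| * Kg := this
    linarith

lemma gG_lipschitz (d : ℕ) (χ : ℝ) :
    LipschitzWith (Real.toNNReal (2 * Kg)) (fun s => gG d s χ) := by
  refine LipschitzWith.of_dist_le_mul (fun s s' => ?_)
  rw [Real.dist_eq, Real.dist_eq, Real.coe_toNNReal _ (mul_nonneg (by norm_num) Kg_pos.le)]
  calc |gG d s χ - gG d s' χ| ≤ 2 * |s - s'| * Kg := gG_abs_s d χ s' s
    _ = 2 * Kg * |s - s'| := by ring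

lemma rNC_continuous (d : ℕ) (χ : ℝ) : Continuous (fun u => rNC d u χ) := by
  simp only [rNC_eq]
  exact (gG_lipschitz d χ).continuous.comp Real.continuous_sqrt

lemma rNC_nonneg (d : ℕ) (u χ : ℝ) : 0 ≤ rNC d u χ := by rw [rNC_eq]; exact gG_nonneg _ _ _

lemma rNC_le_one (d : ℕ) (u χ : ℝ) : rNC d u χ ≤ 1 := by rw [rNC_eq]; exact gG_le_one _ _ _

lemma rNC_abs_chi (d : ℕ) (u : ℝ) {χ' χ : ℝ} (h0 : 0 ≤ χ') (h : χ' ≤ χ) :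
    |rNC d u χ - rNC d u χ'| ≤ 2 * Real.sqrt (χ ^ 2 - χ' ^ 2) * Kg := by
  rw [rNC_eq, rNC_eq]; exact gG_abs_chi d _ h0 h

lemma rNC_integrable (d : ℕ) (χ : ℝ) (F : Measure ℝ) [IsProbabilityMeasure F] :
    Integrable (fun u => rNC d u χ) F := by
  refine (integrable_const (1:ℝ)).mono' (rNC_continuous d χ).aestronglyMeasurable ?_
  filter_upwards with u
  rw [Real.norm_eq_abs, abs_of_nonneg (rNC_nonneg d u χ)]
  exact rNC_le_one d u χ

lemma integral_rNC_nonneg (d : ℕ) (χ : ℝ) (F : Measure ℝ) :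
    0 ≤ ∫ u, rNC d u χ ∂F :=
  integral_nonneg (fun u => rNC_nonneg d u χ)

lemma integral_rNC_le_one (d : ℕ) (χ : ℝ) (F : Measure ℝ) [IsProbabilityMeasure F] :
    (∫ u, rNC d u χ ∂F) ≤ 1 := by
  calc (∫ u, rNC d u χ ∂F) ≤ ∫ _, (1:ℝ) ∂F :=
        integral_mono (rNC_integrable d χ F) (integrable_const 1) (fun u => rNC_le_one d u χ)
    _ = 1 := by simp

lemma integrable_dirac' {f : ℝ → ℝ} (hf : Measurable f) (a : ℝ) :
    Integrable f (Measure.dirac a) := by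
  refine ⟨hf.aestronglyMeasurable, ?_⟩
  simp only [HasFiniteIntegral, lintegral_dirac]
  exact ENNReal.coe_lt_top

lemma dirac_mem {a : ℝ} (ha : 0 ≤ a) : Measure.dirac a ∈ momentMeasures a (a ^ 2) := by
  refine ⟨inferInstance, ?_, integrable_dirac' measurable_id a,
    integrable_dirac' (measurable_id.pow_const 2) a, ?_, ?_⟩
  · rw [Measure.dirac_apply' _ measurableSet_Iio, Set.indicator_of_notMem]
    simp [ha.not_gt]
  · exact integral_dirac _ a
  · exact integral_dirac _ a

lemma mix_mem {F H : Measure ℝ} {a b α β t : ℝ} (ht0 : 0 ≤ t) (ht1 : t ≤ 1)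
    (hF : F ∈ momentMeasures a b) (hH : H ∈ momentMeasures α β) :
    (ENNReal.ofReal (1 - t) • F + ENNReal.ofReal t • H) ∈
      momentMeasures ((1 - t) * a + t * α) ((1 - t) * b + t * β) := by
  obtain ⟨hFp, hF0, hF1, hF2, hFm1, hFm2⟩ := hF
  obtain ⟨hHp, hH0, hH1, hH2, hHm1, hHm2⟩ := hH
  have ht1' : (0:ℝ) ≤ 1 - t := by linarith
  have hint : ∀ f : ℝ → ℝ, Integrable f F → Integrable f H →
      Integrable f (ENNReal.ofReal (1 - t) • F + ENNReal.ofReal t • H) := by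
    intro f h1 h2
    exact (h1.smul_measure ENNReal.ofReal_ne_top).add_measure
      (h2.smul_measure ENNReal.ofReal_ne_top)
  have hintegral : ∀ f : ℝ → ℝ, Integrable f F → Integrable f H →
      (∫ u, f u ∂(ENNReal.ofReal (1 - t) • F + ENNReal.ofReal t • H)) =
        (1 - t) * (∫ u, f u ∂F) + t * (∫ u, f u ∂H) := by
    intro f h1 h2
    rw [integral_add_measure (h1.smul_measure ENNReal.ofReal_ne_top)
      (h2.smul_measure ENNReal.ofReal_ne_top), integral_smul_measure, integral_smul_measure,
      ENNReal.toReal_ofReal ht1', ENNReal.toReal_ofReal ht0]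
    simp [smul_eq_mul]
  refine ⟨⟨?_⟩, ?_, hint _ hF1 hH1, hint _ hF2 hH2, ?_, ?_⟩
  · simp only [Measure.add_apply, Measure.smul_apply, smul_eq_mul,
      hFp.measure_univ, hHp.measure_univ, mul_one]
    rw [← ENNReal.ofReal_add ht1' ht0]
    norm_num
  · simp [Measure.add_apply, Measure.smul_apply, hF0, hH0]
  · rw [hintegral _ hF1 hH1, hFm1, hHm1]
  · rw [hintegral _ hF2 hH2, hFm2, hHm2]

lemma exists_moment_measure {α β : ℝ} (hα : 0 < α) (hαβ : α ^ 2 ≤ β) :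
    (momentMeasures α β).Nonempty := by
  have hβ : 0 < β := lt_of_lt_of_le (by positivity) hαβ
  set q : ℝ := α ^ 2 / β with hq
  have hq0 : 0 ≤ q := by positivity
  have hq1 : q ≤ 1 := by rw [hq, div_le_one hβ]; exact hαβ
  have hc : (0:ℝ) ≤ β / α := by positivity
  refine ⟨ENNReal.ofReal (1 - (1 - q)) • Measure.dirac (β / α)
    + ENNReal.ofReal (1 - q) • Measure.dirac 0, ?_⟩
  have := mix_mem (t := 1 - q) (by linarith) (by linarith) (dirac_mem hc) (dirac_mem le_rfl)
  convert this using 2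
  · rw [hq]; field_simp; ring
  · rw [hq]; field_simp; ring

lemma mom_ae_nonneg {F : Measure ℝ} {a b : ℝ} (hF : F ∈ momentMeasures a b) :
    ∀ᵐ u ∂F, 0 ≤ u := by
  have h0 := hF.2.1
  rw [ae_iff]
  convert h0 using 2
  ext u
  simp [Set.mem_Iio, not_le]

lemma mom_fst_nonneg {F : Measure ℝ} {a b : ℝ} (hF : F ∈ momentMeasures a b) : 0 ≤ a := by
  rw [← hF.2.2.2.2.1]
  exact integral_nonneg_of_ae (mom_ae_nonneg hF)

lemma integral_sq_sub {F : Measure ℝ} (hFp : IsProbabilityMeasure F)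
    (h1 : Integrable (fun u => u) F) (h2 : Integrable (fun u => u ^ 2) F) (c : ℝ) :
    Integrable (fun u => (u - c) ^ 2) F ∧
      (∫ u, (u - c) ^ 2 ∂F) = (∫ u, u ^ 2 ∂F) - 2 * c * (∫ u, u ∂F) + c ^ 2 := by
  have heq : (fun u : ℝ => (u - c) ^ 2) = fun u => u ^ 2 - (2 * c) * u + c ^ 2 := by
    funext u; ring
  have hint : Integrable (fun u => u ^ 2 - (2 * c) * u + c ^ 2) F :=
    (h2.sub (h1.const_mul (2 * c))).add (integrable_const _)
  refine ⟨heq ▸ hint, ?_⟩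
  have ha : Integrable (fun u : ℝ => u ^ 2 - 2 * c * u) F := h2.sub (h1.const_mul (2 * c))
  rw [heq, integral_add ha (integrable_const _),
    integral_sub h2 (h1.const_mul (2 * c)), integral_const_mul]
  simp [hFp.measure_univ]

lemma mom_snd_ge_sq {F : Measure ℝ} {a b : ℝ} (hF : F ∈ momentMeasures a b) : a ^ 2 ≤ b := by
  obtain ⟨hFp, hF0, hF1, hF2, hFm1, hFm2⟩ := hF
  obtain ⟨hi, he⟩ := integral_sq_sub hFp hF1 hF2 a
  have h0 : 0 ≤ ∫ u, (u - a) ^ 2 ∂F := integral_nonneg (fun u => sq_nonneg _)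
  rw [he, hFm1, hFm2] at h0
  nlinarith

lemma mom_zero_snd {F : Measure ℝ} {b : ℝ} (hF : F ∈ momentMeasures 0 b) : b = 0 := by
  obtain ⟨hFp, hF0, hF1, hF2, hFm1, hFm2⟩ := hF
  have hae : (fun u : ℝ => u) =ᵐ[F] 0 := by
    rw [← integral_eq_zero_iff_of_nonneg_ae (mom_ae_nonneg ⟨hFp, hF0, hF1, hF2, hFm1, hFm2⟩) hF1]
    exact hFm1
  have hae2 : (fun u : ℝ => u ^ 2) =ᵐ[F] 0 := by
    filter_upwards [hae] with u hu
    simp only [Pi.zero_apply] at hu ⊢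
    rw [hu]; ring
  rw [← hFm2, integral_congr_ae hae2]
  simp

-- image set facts
lemma rho_image_nonempty {d : ℕ} {m2 m4 χ : ℝ} (h : (m2, m4) ∈ momentSet) :
    ((fun F => ∫ u, rNC d u χ ∂F) '' momentMeasures m2 m4).Nonempty :=
  h.image _

lemma rho_image_bddAbove (d : ℕ) (m2 m4 χ : ℝ) :
    BddAbove ((fun F => ∫ u, rNC d u χ ∂F) '' momentMeasures m2 m4) := by
  refine ⟨1, ?_⟩
  rintro x ⟨F, hF, rfl⟩
  haveI := hF.1
  exact integral_rNC_le_one d χ F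

lemma rho_nonneg {d : ℕ} {m2 m4 χ : ℝ} (h : (m2, m4) ∈ momentSet) :
    0 ≤ rho d m2 m4 χ := by
  obtain ⟨F, hF⟩ := h
  refine le_trans (integral_rNC_nonneg d χ F) (le_csSup (rho_image_bddAbove d m2 m4 χ) ?_)
  exact ⟨F, hF, rfl⟩

lemma rho_le_one {d : ℕ} {m2 m4 χ : ℝ} (h : (m2, m4) ∈ momentSet) :
    rho d m2 m4 χ ≤ 1 := by
  refine csSup_le (rho_image_nonempty h) ?_
  rintro x ⟨F, hF, rfl⟩
  haveI := hF.1
  exact integral_rNC_le_one d χ F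

lemma csSup_image_diff_le {ι : Type*} {s : Set ι} (hs : s.Nonempty) {f g : ι → ℝ} {c : ℝ}
    (h : ∀ i ∈ s, |f i - g i| ≤ c) (hf : BddAbove (f '' s)) (hg : BddAbove (g '' s)) :
    |sSup (f '' s) - sSup (g '' s)| ≤ c := by
  rw [abs_sub_le_iff]
  constructor
  · rw [sub_le_iff_le_add]
    refine csSup_le (hs.image f) ?_
    rintro y ⟨i, hi, rfl⟩
    have h1 : g i ≤ sSup (g '' s) := le_csSup hg ⟨i, hi, rfl⟩
    have h2 := abs_sub_le_iff.mp (h i hi)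
    linarith [h2.1]
  · rw [sub_le_iff_le_add]
    refine csSup_le (hs.image g) ?_
    rintro y ⟨i, hi, rfl⟩
    have h1 : f i ≤ sSup (f '' s) := le_csSup hf ⟨i, hi, rfl⟩
    have h2 := abs_sub_le_iff.mp (h i hi)
    linarith [h2.2]

lemma rho_abs_chi {d : ℕ} {m2 m4 : ℝ} (hp : (m2, m4) ∈ momentSet) {χ' χ : ℝ}
    (h0 : 0 ≤ χ') (h : χ' ≤ χ) :
    |rho d m2 m4 χ - rho d m2 m4 χ'| ≤ 2 * Real.sqrt (χ ^ 2 - χ' ^ 2) * Kg := by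
  refine csSup_image_diff_le hp (fun F hF => ?_) (rho_image_bddAbove d m2 m4 χ)
    (rho_image_bddAbove d m2 m4 χ')
  haveI := hF.1
  calc |(∫ u, rNC d u χ ∂F) - ∫ u, rNC d u χ' ∂F|
      = |∫ u, (rNC d u χ - rNC d u χ') ∂F| := by
        rw [integral_sub (rNC_integrable d χ F) (rNC_integrable d χ' F)]
    _ ≤ ∫ u, |rNC d u χ - rNC d u χ'| ∂F := by
        simpa [Real.norm_eq_abs] using
          norm_integral_le_integral_norm (μ := F) (fun u => rNC d u χ - rNC d u χ')
    _ ≤ ∫ _, 2 * Real.sqrt (χ ^ 2 - χ' ^ 2) * Kg ∂F := by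
        refine integral_mono ?_ (integrable_const _) (fun u => rNC_abs_chi d u h0 h)
        exact ((rNC_integrable d χ F).sub (rNC_integrable d χ' F)).abs
    _ = 2 * Real.sqrt (χ ^ 2 - χ' ^ 2) * Kg := by simp

-- Part 1 : continuity in χ
lemma part1 (d : ℕ) {p : ℝ × ℝ} (hp : p ∈ momentSet) :
    ContinuousOn (fun χ => rho d p.1 p.2 χ) (Set.Ici 0) := by
  intro χ₀ hχ₀
  simp only [Set.mem_Ici] at hχ₀
  have hp' : (p.1, p.2) ∈ momentSet := by simpa using hp
  have hbound : ∀ χ ∈ Set.Ici (0:ℝ),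
      |rho d p.1 p.2 χ - rho d p.1 p.2 χ₀| ≤ 2 * Real.sqrt |χ ^ 2 - χ₀ ^ 2| * Kg := by
    intro χ hχ
    simp only [Set.mem_Ici] at hχ
    rcases le_total χ₀ χ with hle | hle
    · rw [show |χ ^ 2 - χ₀ ^ 2| = χ ^ 2 - χ₀ ^ 2 from abs_of_nonneg (by nlinarith)]
      exact rho_abs_chi (d := d) hp' hχ₀ hle
    · rw [abs_sub_comm, show |χ ^ 2 - χ₀ ^ 2| = χ₀ ^ 2 - χ ^ 2 from by
        rw [abs_sub_comm]; exact abs_of_nonneg (by nlinarith)]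
      exact rho_abs_chi (d := d) hp' hχ hle
  have hφcont : Continuous (fun χ : ℝ => 2 * Real.sqrt |χ ^ 2 - χ₀ ^ 2| * Kg) := by
    fun_prop
  have hφ0 : (fun χ : ℝ => 2 * Real.sqrt |χ ^ 2 - χ₀ ^ 2| * Kg) χ₀ = 0 := by simp
  have hφ : Filter.Tendsto (fun χ : ℝ => 2 * Real.sqrt |χ ^ 2 - χ₀ ^ 2| * Kg)
      (nhdsWithin χ₀ (Set.Ici 0)) (nhds 0) := by
    have := (hφcont.tendsto χ₀).mono_left (nhdsWithin_le_nhds (s := Set.Ici 0))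
    simpa using this
  have hsq : Filter.Tendsto (fun χ => rho d p.1 p.2 χ - rho d p.1 p.2 χ₀)
      (nhdsWithin χ₀ (Set.Ici 0)) (nhds 0) := by
    refine squeeze_zero_norm' ?_ hφ
    filter_upwards [self_mem_nhdsWithin] with χ hχ
    exact hbound χ hχ
  have := hsq.add_const (rho d p.1 p.2 χ₀)
  simp only [zero_add, sub_add_cancel] at this
  exact this

-- mixture bound
lemma integral_mix (d : ℕ) (χ : ℝ) {F H : Measure ℝ} [IsProbabilityMeasure F]
    [IsProbabilityMeasure H] {t : ℝ} (ht0 : 0 ≤ t) (ht1 : t ≤ 1) :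
    (∫ u, rNC d u χ ∂(ENNReal.ofReal (1 - t) • F + ENNReal.ofReal t • H)) =
      (1 - t) * (∫ u, rNC d u χ ∂F) + t * (∫ u, rNC d u χ ∂H) := by
  rw [integral_add_measure ((rNC_integrable d χ F).smul_measure ENNReal.ofReal_ne_top)
    ((rNC_integrable d χ H).smul_measure ENNReal.ofReal_ne_top),
    integral_smul_measure, integral_smul_measure,
    ENNReal.toReal_ofReal (by linarith), ENNReal.toReal_ofReal ht0]
  simp [smul_eq_mul]

lemma rho_le_mix (d : ℕ) (χ : ℝ) {p q : ℝ × ℝ} (hp : p ∈ momentSet)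
    {α β t : ℝ} (ht0 : 0 ≤ t) (ht1 : t ≤ 1) (hH : (momentMeasures α β).Nonempty)
    (h1 : q.1 = (1 - t) * p.1 + t * α) (h2 : q.2 = (1 - t) * p.2 + t * β) :
    rho d p.1 p.2 χ ≤ rho d q.1 q.2 χ + t := by
  obtain ⟨H, hHm⟩ := hH
  refine csSup_le (hp.image _) ?_
  rintro x ⟨F, hF, rfl⟩
  haveI := hF.1
  haveI := hHm.1
  have hM : (ENNReal.ofReal (1 - t) • F + ENNReal.ofReal t • H) ∈
      momentMeasures q.1 q.2 := by
    rw [h1, h2]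
    exact mix_mem ht0 ht1 hF hHm
  have hval := integral_mix d χ (F := F) (H := H) ht0 ht1
  have hle : (∫ u, rNC d u χ ∂F) - t ≤
      (∫ u, rNC d u χ ∂(ENNReal.ofReal (1 - t) • F + ENNReal.ofReal t • H)) := by
    rw [hval]
    have hF1 := integral_rNC_le_one d χ F
    have hH0 := integral_rNC_nonneg d χ H
    nlinarith
  have := le_csSup (rho_image_bddAbove d q.1 q.2 χ) ⟨_, hM, rfl⟩
  rw [rho]
  linarith

lemma cheb {F : Measure ℝ} {a b : ℝ} (hF : F ∈ momentMeasures a b) {κ : ℝ} (hκ : 0 < κ) :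
    (F {u | κ ^ 2 ≤ (u - a) ^ 2}).toReal ≤ (b - a ^ 2) / κ ^ 2 := by
  haveI := hF.1
  obtain ⟨hi, he⟩ := integral_sq_sub hF.1 hF.2.2.1 hF.2.2.2.1 a
  have hmark := mul_meas_ge_le_integral_of_nonneg (μ := F)
    (Filter.Eventually.of_forall (fun u => sq_nonneg (u - a))) hi (κ ^ 2)
  rw [he, hF.2.2.2.2.1, hF.2.2.2.2.2] at hmark
  rw [le_div_iff₀ (by positivity)]
  rw [measureReal_def] at hmark
  nlinarith

lemma integral_rNC_close (d : ℕ) (χ a : ℝ) {ε κ : ℝ} (hε : 0 < ε) (hκ : 0 < κ)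
    (hr : ∀ u, |u - a| ≤ 2 * κ → |rNC d u χ - rNC d a χ| ≤ ε)
    {F : Measure ℝ} {a' b' : ℝ} (hF : F ∈ momentMeasures a' b') (ha' : |a' - a| ≤ κ) :
    |(∫ u, rNC d u χ ∂F) - rNC d a χ| ≤ ε + 2 * ((b' - a' ^ 2) / κ ^ 2) := by
  haveI := hF.1
  set c := rNC d a χ with hc
  set f := fun u => rNC d u χ with hf
  have hint : Integrable f F := rNC_integrable d χ F
  have h1 : (∫ u, f u ∂F) - c = ∫ u, (f u - c) ∂F := by
    rw [integral_sub hint (integrable_const c)]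
    simp
  rw [h1]
  have habs : |∫ u, (f u - c) ∂F| ≤ ∫ u, |f u - c| ∂F := by
    simpa [Real.norm_eq_abs] using
      norm_integral_le_integral_norm (μ := F) (fun u => f u - c)
  refine le_trans habs ?_
  set T : Set ℝ := {u | (u - a') ^ 2 < κ ^ 2} with hT
  have hTmeas : MeasurableSet T :=
    measurableSet_lt (((measurable_id.sub_const a').pow_const 2)) measurable_const
  have hintabs : Integrable (fun u => |f u - c|) F := (hint.sub (integrable_const c)).abs
  have hsplit : ∫ u, |f u - c| ∂F =
      (∫ u in T, |f u - c| ∂F) + ∫ u in Tᶜ, |f u - c| ∂F :=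
    (integral_add_compl hTmeas hintabs).symm
  rw [hsplit]
  have hTbound : (∫ u in T, |f u - c| ∂F) ≤ ε := by
    calc (∫ u in T, |f u - c| ∂F) ≤ ∫ _ in T, ε ∂F := by
          refine setIntegral_mono_on hintabs.integrableOn ((integrableOn_const_iff (by finiteness)).mpr ?_) hTmeas ?_
          · right; exact measure_lt_top _ _
          · intro u hu
            have h2 : |u - a'| < κ := by
              rw [← Real.sqrt_sq hκ.le, ← Real.sqrt_sq_eq_abs]
              exact Real.sqrt_lt_sqrt (sq_nonneg _) hu
            refine hr u ?_
            calc |u - a| = |(u - a') + (a' - a)| := by ring_nf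
              _ ≤ |u - a'| + |a' - a| := abs_add_le _ _
              _ ≤ 2 * κ := by linarith
      _ = (F T).toReal * ε := by rw [setIntegral_const]; simp [smul_eq_mul, measureReal_def]
      _ ≤ 1 * ε := by
          refine mul_le_mul_of_nonneg_right ?_ hε.le
          calc (F T).toReal ≤ (1 : ℝ≥0∞).toReal :=
                ENNReal.toReal_mono ENNReal.one_ne_top prob_le_one
            _ = 1 := ENNReal.toReal_one
      _ = ε := one_mul ε
  have hTc : (∫ u in Tᶜ, |f u - c| ∂F) ≤ 2 * ((b' - a' ^ 2) / κ ^ 2) := by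
    have hcompl : Tᶜ = {u | κ ^ 2 ≤ (u - a') ^ 2} := by
      ext u; simp [hT, not_lt]
    calc (∫ u in Tᶜ, |f u - c| ∂F) ≤ ∫ _ in Tᶜ, (2:ℝ) ∂F := by
          refine setIntegral_mono_on hintabs.integrableOn ((integrableOn_const_iff (by finiteness)).mpr ?_) 
            hTmeas.compl ?_
          · right; exact measure_lt_top _ _
          · intro u _
            rw [abs_sub_le_iff]
            constructor
            · have := rNC_le_one d u χ; have := rNC_nonneg d a χ
              simp only [hf, hc]; linarith
            · have := rNC_le_one d a χ; have := rNC_nonneg d u χ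
              simp only [hf, hc]; linarith
      _ = (F Tᶜ).toReal * 2 := by rw [setIntegral_const]; simp [smul_eq_mul, measureReal_def]
      _ ≤ ((b' - a' ^ 2) / κ ^ 2) * 2 := by
          refine mul_le_mul_of_nonneg_right ?_ (by norm_num)
          rw [hcompl]
          exact cheb hF hκ
      _ = 2 * ((b' - a' ^ 2) / κ ^ 2) := by ring
  linarith

lemma dist_fst_le' (q p : ℝ × ℝ) : |q.1 - p.1| ≤ dist q p := by
  rw [← Real.dist_eq]
  exact le_trans (le_max_left _ _) (le_of_eq Prod.dist_eq.symm)

lemma dist_snd_le' (q p : ℝ × ℝ) : |q.2 - p.2| ≤ dist q p := by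
  rw [← Real.dist_eq]
  exact le_trans (le_max_right _ _) (le_of_eq Prod.dist_eq.symm)

lemma boundary_cwa (d : ℕ) (χ : ℝ) {p : ℝ × ℝ} (hp : p ∈ momentSet) (hb : p.2 = p.1 ^ 2) :
    ContinuousWithinAt (fun p : ℝ × ℝ => rho d p.1 p.2 χ) momentSet p := by
  rw [Metric.continuousWithinAt_iff]
  intro ε hε
  set a := p.1 with ha
  set ε' := ε / 7 with hε'def
  have hε' : 0 < ε' := by positivity
  -- continuity of rNC at a
  obtain ⟨κ₀, hκ₀, hκr⟩ := Metric.continuousAt_iff.mp ((rNC_continuous d χ).continuousAt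
    (x := a)) ε' hε'
  set κ := κ₀ / 5 with hκdef
  have hκ : 0 < κ := by positivity
  have hr : ∀ u, |u - a| ≤ 2 * κ → |rNC d u χ - rNC d a χ| ≤ ε' := by
    intro u hu
    have h9 := hκr (show dist u a < κ₀ by rw [Real.dist_eq]; linarith)
    rw [Real.dist_eq] at h9
    exact h9.le
  set δ := min κ (min 1 (ε' * κ ^ 2 / (2 + 2 * |a|))) with hδdef
  have hδ : 0 < δ := by
    refine lt_min hκ (lt_min one_pos ?_)
    positivity
  refine ⟨δ, hδ, ?_⟩
  have key : ∀ q ∈ momentSet, dist q p < δ → |rho d q.1 q.2 χ - rNC d a χ| ≤ 3 * ε' := by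
    intro q hq hqd
    have ha' : |q.1 - a| ≤ κ := by
      refine le_trans (dist_fst_le' q p) (le_trans hqd.le ?_)
      exact min_le_left _ _
    have hb' : |q.2 - p.2| ≤ δ := le_trans (dist_snd_le' q p) hqd.le
    have hδ1 : δ ≤ 1 := le_trans (min_le_right _ _) (min_le_left _ _)
    have hδ2 : δ * (2 + 2 * |a|) ≤ ε' * κ ^ 2 := by
      have h1 : δ ≤ ε' * κ ^ 2 / (2 + 2 * |a|) :=
        le_trans (min_le_right _ _) (min_le_right _ _)
      have h2 : (0:ℝ) < 2 + 2 * |a| := by positivity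
      calc δ * (2 + 2 * |a|) ≤ (ε' * κ ^ 2 / (2 + 2 * |a|)) * (2 + 2 * |a|) :=
            mul_le_mul_of_nonneg_right h1 h2.le
        _ = ε' * κ ^ 2 := by field_simp
    have hvar : q.2 - q.1 ^ 2 ≤ ε' * κ ^ 2 := by
      have hfst : |q.1 - a| ≤ δ := le_trans (dist_fst_le' q p) hqd.le
      have h3 : a ^ 2 - q.1 ^ 2 ≤ δ * (1 + 2 * |a|) := by
        have : a ^ 2 - q.1 ^ 2 = (a - q.1) * (a + q.1) := by ring
        calc a ^ 2 - q.1 ^ 2 ≤ |a - q.1| * |a + q.1| := by rw [this, ← abs_mul]; exact le_abs_self _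
          _ ≤ δ * (1 + 2 * |a|) := by
              refine mul_le_mul ?_ ?_ (abs_nonneg _) hδ.le
              · rwa [abs_sub_comm]
              · calc |a + q.1| = |(2 * a) + (q.1 - a)| := by ring_nf
                  _ ≤ |2 * a| + |q.1 - a| := abs_add_le _ _
                  _ ≤ 2 * |a| + 1 := by
                      rw [abs_mul]
                      simp only [Nat.abs_ofNat]
                      have : |q.1 - a| ≤ 1 := le_trans hfst hδ1
                      linarith
                  _ = 1 + 2 * |a| := by ring
      have h4 : q.2 - p.2 ≤ δ := le_trans (le_abs_self _) hb'
      have h8 : q.2 - q.1 ^ 2 = (q.2 - p.2) + (a ^ 2 - q.1 ^ 2) := by rw [hb]; ring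
      nlinarith
    have hIF : ∀ F ∈ momentMeasures q.1 q.2,
        |(∫ u, rNC d u χ ∂F) - rNC d a χ| ≤ 3 * ε' := by
      intro F hF
      have := integral_rNC_close d χ a hε' hκ hr hF ha'
      have h5 : (q.2 - q.1 ^ 2) / κ ^ 2 ≤ ε' := by
        rw [div_le_iff₀ (by positivity)]
        linarith
      linarith
    rw [abs_sub_le_iff]
    constructor
    · rw [sub_le_iff_le_add]
      refine csSup_le (hq.image _) ?_
      rintro x ⟨F, hF, rfl⟩
      have := abs_sub_le_iff.mp (hIF F hF)
      linarith [this.1]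
    · rw [sub_le_iff_le_add]
      obtain ⟨F, hF⟩ := hq
      have h6 := abs_sub_le_iff.mp (hIF F hF)
      have h7 : (∫ u, rNC d u χ ∂F) ≤ rho d q.1 q.2 χ :=
        le_csSup (rho_image_bddAbove d q.1 q.2 χ) ⟨F, hF, rfl⟩
      linarith [h6.2]
  intro q hq hqd
  have h1 := key q hq hqd
  have h2 := key p hp (by rwa [dist_self])
  rw [Real.dist_eq]
  have : |rho d q.1 q.2 χ - rho d p.1 p.2 χ| ≤ 6 * ε' := by
    calc |rho d q.1 q.2 χ - rho d p.1 p.2 χ|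
        = |(rho d q.1 q.2 χ - rNC d a χ) - (rho d p.1 p.2 χ - rNC d a χ)| := by ring_nf
      _ ≤ |rho d q.1 q.2 χ - rNC d a χ| + |rho d p.1 p.2 χ - rNC d a χ| := abs_sub _ _
      _ ≤ 6 * ε' := by linarith
  have h7 : 6 * ε' < ε := by rw [hε'def]; linarith
  linarith

lemma interior_cwa (d : ℕ) (χ : ℝ) {p : ℝ × ℝ} (hp : p ∈ momentSet) (hb : p.1 ^ 2 < p.2) :
    ContinuousWithinAt (fun p : ℝ × ℝ => rho d p.1 p.2 χ) momentSet p := by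
  rw [Metric.continuousWithinAt_iff]
  intro ε hε
  set a := p.1 with hadef
  set b := p.2 with hbdef
  set g := b - a ^ 2 with hgdef
  have hg : 0 < g := by rw [hgdef]; linarith
  have ha0 : 0 ≤ a := by obtain ⟨F, hF⟩ := hp; exact mom_fst_nonneg hF
  have ha : 0 < a := by
    rcases ha0.lt_or_eq with h | h
    · exact h
    · exfalso
      obtain ⟨F, hF⟩ := hp
      have hF0 : F ∈ momentMeasures 0 p.2 := by
        rw [show (0:ℝ) = p.1 from h]; exact hF
      have h2 : b = 0 := by rw [hbdef, mom_zero_snd hF0]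
      nlinarith [hb, h2, h.symm]
  set t := min (ε / 2) (1 / 2) with htdef
  have ht0 : 0 < t := by positivity
  have ht1 : t ≤ 1 := le_trans (min_le_right _ _) (by norm_num)
  set e := min a (min g 1) / (2 + 2 * a) with hedef
  have he : 0 < e := by
    refine div_pos (lt_min ha (lt_min hg one_pos)) (by positivity)
  have hea : e < a := by
    rw [hedef, div_lt_iff₀ (by positivity)]
    have h1 : min a (min g 1) ≤ a := min_le_left _ _
    nlinarith
  have heg : e * (2 + 2 * a) ≤ g := by
    have h1 : min a (min g 1) ≤ g := le_trans (min_le_right _ _) (min_le_left _ _)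
    rw [hedef, div_mul_cancel₀ _ (by positivity : (2 + 2*a) ≠ (0:ℝ))]
    exact h1
  have he1 : e ≤ 1 := by
    rw [hedef]
    rw [div_le_one (by positivity)]
    calc min a (min g 1) ≤ 1 := le_trans (min_le_right _ _) (min_le_right _ _)
      _ ≤ 2 + 2 * a := by linarith
  refine ⟨t * e, by positivity, ?_⟩
  intro q hq hqd
  have hd1 : |q.1 - a| ≤ t * e := le_trans (dist_fst_le' q p) hqd.le
  have hd2 : |q.2 - b| ≤ t * e := le_trans (dist_snd_le' q p) hqd.le
  -- helper to verify moment conditions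
  have hmom : ∀ α β : ℝ, |α - a| ≤ e → |β - b| ≤ e → (momentMeasures α β).Nonempty := by
    intro α β h1 h2
    have h1' := abs_sub_le_iff.mp h1
    have h2' := abs_sub_le_iff.mp h2
    refine exists_moment_measure (by linarith [h1'.1, hea]) ?_
    have hα : α ≤ a + e := by linarith [h1'.1]
    have hα2 : 0 < α := by linarith [h1'.1, hea]
    have hαsq : α ^ 2 ≤ (a + e) ^ 2 := by nlinarith
    have hβ : b - e ≤ β := by linarith [h2'.2]
    nlinarith
  -- direction 1 : rho p ≤ rho q + t
  have hdir1 : rho d p.1 p.2 χ ≤ rho d q.1 q.2 χ + t := by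
    set α := (q.1 - (1 - t) * a) / t with hα
    set β := (q.2 - (1 - t) * b) / t with hβ
    refine rho_le_mix d χ hp ht0.le ht1 (hmom α β ?_ ?_) ?_ ?_
    · rw [show α = a + (q.1 - a)/t by rw [hα]; field_simp; ring]
      rw [add_sub_cancel_left, abs_div, abs_of_pos ht0, div_le_iff₀ ht0]
      calc |q.1 - a| ≤ t * e := hd1
        _ = e * t := mul_comm _ _
    · rw [show β = b + (q.2 - b)/t by rw [hβ]; field_simp; ring]
      rw [add_sub_cancel_left, abs_div, abs_of_pos ht0, div_le_iff₀ ht0]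
      calc |q.2 - b| ≤ t * e := hd2
        _ = e * t := mul_comm _ _
    · rw [hα]; field_simp; try ring
    · rw [hβ]; field_simp; try ring
  -- direction 2 : rho q ≤ rho p + t
  have hdir2 : rho d q.1 q.2 χ ≤ rho d p.1 p.2 χ + t := by
    set α := (a - (1 - t) * q.1) / t with hα
    set β := (b - (1 - t) * q.2) / t with hβ
    refine rho_le_mix d χ hq ht0.le ht1 (hmom α β ?_ ?_) ?_ ?_
    · rw [show α = a + ((1 - t) * (a - q.1))/t by rw [hα]; field_simp; ring]
      rw [add_sub_cancel_left, abs_div, abs_of_pos ht0, div_le_iff₀ ht0, abs_mul]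
      calc |1 - t| * |a - q.1| ≤ 1 * (t * e) := by
            refine mul_le_mul ?_ ?_ (abs_nonneg _) one_pos.le
            · rw [abs_of_nonneg (by linarith)]; linarith
            · rwa [abs_sub_comm]
        _ = e * t := by ring
    · rw [show β = b + ((1 - t) * (b - q.2))/t by rw [hβ]; field_simp; ring]
      rw [add_sub_cancel_left, abs_div, abs_of_pos ht0, div_le_iff₀ ht0, abs_mul]
      calc |1 - t| * |b - q.2| ≤ 1 * (t * e) := by
            refine mul_le_mul ?_ ?_ (abs_nonneg _) one_pos.le
            · rw [abs_of_nonneg (by linarith)]; linarith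
            · rwa [abs_sub_comm]
        _ = e * t := by ring
    · rw [hα]; field_simp; try ring
    · rw [hβ]; field_simp; try ring
  rw [Real.dist_eq, abs_sub_lt_iff]
  have ht2 : t < ε := lt_of_le_of_lt (min_le_left _ _) (by linarith)
  constructor <;> linarith


/-- **Continuity of the maximal non-coverage (Lemma B.2).** For fixed
`(m⁽²⁾, m⁽⁴⁾) ∈ 𝓜`, the map `χ ↦ ρ_{m⁽²⁾, m⁽⁴⁾}(χ)` is continuous on `[0, ∞)`;
and for every fixed `χ ≥ 0`, the map `(m⁽²⁾, m⁽⁴⁾) ↦ ρ_{m⁽²⁾, m⁽⁴⁾}(χ)` is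
continuous on `𝓜`. -/
theorem rho_continuous (d : ℕ) (hd : 1 ≤ d) :
    (∀ p ∈ momentSet, ContinuousOn (fun χ => rho d p.1 p.2 χ) (Set.Ici 0)) ∧
    (∀ χ : ℝ, 0 ≤ χ →
      ContinuousOn (fun p : ℝ × ℝ => rho d p.1 p.2 χ) momentSet) := by
  constructor
  · intro p hp
    exact part1 d hp
  · intro χ hχ p hp
    obtain ⟨F, hF⟩ := hp
    rcases (mom_snd_ge_sq hF).lt_or_eq with h | h
    · exact interior_cwa d χ ⟨F, hF⟩ h
    · exact boundary_cwa d χ ⟨F, hF⟩ h.symm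
end
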